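/- arXiv:math/0605149 — 2 statements merged into one kernel-verified Lean document; each statement's English description precedes it below -/
import Mathlib

section
/- Let A be a metrizable abelian topological group. Then the double dual Â̂ is complete and metrizable, and both evaluation maps α_A : A → Â̂ and α_{Â} : Â → Â̂̂ are continuous. -/
open scoped Topology

noncomputable section

/-- The circle group `T = R/Z`. -/
abbrev Torus := AddCircle (1 : ℝ)

/-- `Λ₁`, the image of `[-1/4, 1/4]` in `T = R/Z`. -/
def Lam : Set Torus := (fun x : ℝ => (x : Torus)) '' Set.Icc (-(1/4)) (1/4)

/-- The Pontryagin dual: continuous characters into `T = R/Z`, with the compact-open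
topology (the topology on `ContinuousAddMonoidHom` is induced from `C(A, T)`). -/
abbrev PDual (A : Type*) [AddCommGroup A] [TopologicalSpace A] [IsTopologicalAddGroup A] :=
  ContinuousAddMonoidHom A Torus

/-- The polar `S^▷ = {χ ∈ Â : χ(S) ⊆ Λ₁}` of a subset `S ⊆ A`. -/
def polar {A : Type*} [AddCommGroup A] [TopologicalSpace A] [IsTopologicalAddGroup A]
    (S : Set A) : Set (PDual A) := {χ | ∀ s ∈ S, χ s ∈ Lam}

/-- The prepolar `Φ^◁ = {a ∈ A : χ(a) ∈ Λ₁ for all χ ∈ Φ}` of a set `Φ ⊆ Â`. -/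
def prepolar {A : Type*} [AddCommGroup A] [TopologicalSpace A] [IsTopologicalAddGroup A]
    (Φ : Set (PDual A)) : Set A := {a | ∀ χ ∈ Φ, χ a ∈ Lam}

/-- The evaluation homomorphism `α_A : A → Â̂`, `α_A(a)(χ) = χ(a)`. -/
def evalHom {A : Type*} [AddCommGroup A] [TopologicalSpace A] [IsTopologicalAddGroup A]
    (a : A) : PDual (PDual A) where
  toFun := fun χ => χ a
  map_zero' := rfl
  map_add' := fun _ _ => rfl
  continuous_toFun := continuous_eval_const a

/-!
The polar `U^▷` of a neighbourhood `U` of `0` is compact (Arzelà–Ascoli): if `j • t ∈ Λ₁` for all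
`j ≤ m` then `m ‖t‖ ≤ 1/4`, so `U^▷` is equicontinuous. Conversely, as `A` is first countable,
every compact subset of `Â` is equicontinuous and hence lies in some `Uₙ^▷` for a countable
neighbourhood basis `(Uₙ)`; thus `Â` is hemicompact and `C(Â, 𝕋)` has a countably generated
uniformity.

The core is a diagonal construction: if `F ⊆ Â` meets every compact set in a closed set and
`0 ∉ F`, one chooses finite `Sₙ₊₁ ⊆ Sₙ ∪ Uₙ` with `Sₙ^▷ ∩ Uₙ^▷ ∩ F = ∅`; then
`K = {0} ∪ ⋃ Sₙ` is compact and `{χ | χ(K) ⊆ Λ₁°}` is a neighbourhood of `0` missing `F`.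
Consequently `Â` is a k-space, so `C(Â, 𝕋)` is complete, and so is its closed subgroup `Â̂`.
The same lemma shows that compact subsets of `Â̂` are equicontinuous on `Â`, which gives the
continuity of `α_Â`, while that of `α_A` comes from the equicontinuity of compact subsets of `Â`.
-/

open Set Filter Topology
open scoped Uniformity UniformConvergence

namespace Torus

theorem exists_coe_eq_abs_eq_norm (t : Torus) : ∃ x : ℝ, (x : Torus) = t ∧ |x| = ‖t‖ := by
  obtain ⟨x, rfl⟩ := QuotientAddGroup.mk_surjective t
  refine ⟨x - round x, ?_, ?_⟩
  · simp
  · simp [AddCircle.norm_eq]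

theorem norm_nsmul_of_mul_norm_le {t : Torus} {n : ℕ} (h : n * ‖t‖ ≤ 1 / 2) :
    ‖n • t‖ = n * ‖t‖ := by
  obtain ⟨x, rfl, hx⟩ := exists_coe_eq_abs_eq_norm t
  have hnx : |(n : ℝ) * x| = n * ‖(x : Torus)‖ := by rw [abs_mul, Nat.abs_cast, hx]
  rw [← AddCircle.coe_nsmul, nsmul_eq_mul, ← hnx, AddCircle.norm_coe_eq_abs_iff _ one_ne_zero]
  simpa [hnx] using h

end Torus

theorem lam_eq_closedBall : Lam = Metric.closedBall 0 (1 / 4) := by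
  ext t
  rw [mem_closedBall_zero_iff]
  constructor
  · rintro ⟨x, hx, rfl⟩
    have hx : |x| ≤ 1 / 4 := abs_le.mpr (by simpa using hx)
    rwa [(AddCircle.norm_coe_eq_abs_iff _ one_ne_zero).mpr (by norm_num; linarith)]
  · intro ht
    obtain ⟨x, rfl, hx⟩ := Torus.exists_coe_eq_abs_eq_norm t
    exact ⟨x, by simpa using abs_le.mp (hx.trans_le ht), rfl⟩

theorem mem_lam_iff {t : Torus} : t ∈ Lam ↔ ‖t‖ ≤ 1 / 4 := by
  rw [lam_eq_closedBall, mem_closedBall_zero_iff]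

theorem mul_norm_le_of_forall_nsmul_mem_lam {t : Torus} {m : ℕ}
    (h : ∀ j ≤ m, j • t ∈ Lam) : m * ‖t‖ ≤ 1 / 4 := by
  induction m with
  | zero => norm_num
  | succ m ih =>
    have hm : m * ‖t‖ ≤ 1 / 4 := ih fun j hj => h j (hj.trans m.le_succ)
    have h1 : ‖t‖ ≤ 1 / 4 := by simpa [mem_lam_iff] using h 1 (by omega)
    have hle : ((m + 1 : ℕ) : ℝ) * ‖t‖ ≤ 1 / 2 := by push_cast; linarith
    rw [← Torus.norm_nsmul_of_mul_norm_le hle, ← mem_lam_iff]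
    exact h (m + 1) le_rfl

theorem exists_nsmul_notMem_lam {t : Torus} (ht : t ≠ 0) : ∃ n : ℕ, n • t ∉ Lam := by
  by_contra! h
  obtain ⟨n, hn⟩ := exists_nat_gt (1 / (4 * ‖t‖))
  have ht' : 0 < ‖t‖ := norm_pos_iff.mpr ht
  have := mul_norm_le_of_forall_nsmul_mem_lam (m := n) fun j _ => h j
  rw [div_lt_iff₀ (by positivity)] at hn
  linarith

theorem isCompact_insert_of_forall_finite_diff {X : Type*} [TopologicalSpace X] {x : X}
    {T : Set X} (h : ∀ U ∈ 𝓝 x, (T \ U).Finite) : IsCompact (insert x T) := by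
  rw [← Subtype.range_coe (s := T)]
  refine Tendsto.isCompact_insert_range_of_cofinite fun U hU => ?_
  rw [mem_map, mem_cofinite]
  convert (h U hU).preimage Subtype.val_injective.injOn using 1
  ext
  simp

theorem ContinuousMap.isCountablyGenerated_uniformity_of_cofinal {X β : Type*}
    [TopologicalSpace X] [UniformSpace β] [IsCountablyGenerated (𝓤 β)] (K : ℕ → Set X)
    (hK : ∀ n, IsCompact (K n)) (hmono : Monotone K) (hcofinal : ∀ s, IsCompact s → ∃ n, s ⊆ K n) :
    IsCountablyGenerated (𝓤 C(X, β)) :=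
  let ⟨_V, hV⟩ := exists_antitone_basis (𝓤 β)
  ((UniformOnFun.hasAntitoneBasis_uniformity {K | IsCompact K} hK hmono hcofinal hV).comap
    _).isCountablyGenerated

namespace ContinuousAddMonoidHom

variable {X G : Type*} [AddMonoid X] [TopologicalSpace X] [UniformSpace G] [AddCommGroup G]
  [IsUniformAddGroup G]

theorem isUniformInducing_toContinuousMap :
    @IsUniformInducing _ _ (IsTopologicalAddGroup.rightUniformSpace (X →ₜ+ G)) _
      toContinuousMap := by
  let := IsTopologicalAddGroup.rightUniformSpace (X →ₜ+ G)
  have : IsUniformAddGroup (X →ₜ+ G) := isUniformAddGroup_of_addCommGroup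
  -- `C(X, G)` has no uniform group instance, so compare uniformities in `X →ᵤ[compacts] G`.
  let φ : (X →ₜ+ G) →+ (X →ᵤ[{K | IsCompact K}] G) :=
    { toFun := fun f => ContinuousMap.toUniformOnFunIsCompact f.toContinuousMap
      map_zero' := rfl
      map_add' := fun _ _ => rfl }
  have hφ : IsUniformInducing φ := AddMonoidHom.isUniformInducing_of_isInducing
    (ContinuousMap.isUniformEmbedding_toUniformOnFunIsCompact.isInducing.comp
      (isInducing_toContinuousMap X G))
  exact (ContinuousMap.isUniformEmbedding_toUniformOnFunIsCompact.isUniformInducing.of_comp_iff).mp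
    hφ

theorem completeSpace_rightUniformSpace [CompleteSpace C(X, G)] [T2Space G] :
    @CompleteSpace (X →ₜ+ G) (IsTopologicalAddGroup.rightUniformSpace (X →ₜ+ G)) := by
  let := IsTopologicalAddGroup.rightUniformSpace (X →ₜ+ G)
  rw [completeSpace_iff_isComplete_range isUniformInducing_toContinuousMap]
  exact (isClosedEmbedding_toContinuousMap X G).isClosed_range.isComplete

end ContinuousAddMonoidHom

theorem continuous_evalHom_of_equicontinuousAt {G : Type*} [AddCommGroup G] [TopologicalSpace G]
    [IsTopologicalAddGroup G]
    (h : ∀ Φ : Set (PDual G), IsCompact Φ → EquicontinuousAt (fun χ : Φ => ⇑(χ : PDual G)) 0) :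
    Continuous (evalHom : G → PDual (PDual G)) := by
  rw [(ContinuousAddMonoidHom.isInducing_toContinuousMap (PDual G) Torus).continuous_iff,
    continuous_iff_continuousAt]
  intro a₀
  rw [ContinuousAt, ContinuousMap.tendsto_iff_forall_isCompact_tendstoUniformlyOn]
  intro Φ hΦ u hu
  have hΦeq := equicontinuous_of_equicontinuousAt_zero (Subtype.val : Φ → PDual G) (h Φ hΦ)
  exact (hΦeq a₀ u hu).mono fun a ha χ hχ => ha ⟨χ, hχ⟩

section Dual

variable {A : Type*} [AddCommGroup A] [TopologicalSpace A] [IsTopologicalAddGroup A]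

theorem polar_antitone : Antitone (polar : Set A → Set (PDual A)) :=
  fun _ _ h _ hχ s hs => hχ s (h hs)

theorem polar_union (S T : Set A) : polar (S ∪ T) = polar S ∩ polar T := by
  ext χ
  simp [polar, or_imp, forall_and]

theorem polar_univ : polar (univ : Set A) = {0} := by
  refine subset_antisymm (fun χ hχ => ?_) ?_
  · by_contra hne
    obtain ⟨a, ha⟩ : ∃ a, χ a ≠ 0 := by
      by_contra! h
      exact hne (ContinuousAddMonoidHom.ext h)
    obtain ⟨n, hn⟩ := exists_nsmul_notMem_lam ha
    exact hn (map_nsmul χ n a ▸ hχ (n • a) trivial)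
  · rintro _ rfl s -
    simp [mem_lam_iff]

theorem exists_finite_subset_disjoint_polar {C : Set (PDual A)} (hC : IsCompact C) {T : Set A}
    (h : Disjoint (polar T) C) : ∃ M ⊆ T, M.Finite ∧ Disjoint (polar M) C := by
  have hcov : C ⊆ ⋃ a ∈ T, (fun χ : PDual A => χ a) ⁻¹' Lamᶜ := fun χ hχ => by
    simpa [polar] using h.notMem_of_mem_right hχ
  obtain ⟨M, hMT, hM, hMcov⟩ := hC.elim_finite_subcover_image
    (fun a _ => (lam_eq_closedBall ▸ Metric.isClosed_closedBall).isOpen_compl.preimage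
      (continuous_eval_const a)) hcov
  refine ⟨M, hMT, hM, disjoint_left.mpr fun χ hχ hχC => ?_⟩
  obtain ⟨a, ha, hχa⟩ := mem_iUnion₂.mp (hMcov hχC)
  exact hχa (hχ a ha)

theorem equicontinuousAt_zero_of_mapsTo_lam {U : Set A} (hU : U ∈ 𝓝 0) :
    EquicontinuousAt (fun f : {f : A →+ Torus | MapsTo f U Lam} => ⇑(f : A →+ Torus)) 0 := by
  rw [Metric.equicontinuousAt_iff_right]
  intro ε hε
  obtain ⟨m, hm⟩ := exists_nat_gt (1 / (4 * ε))
  have hsmall : ∀ᶠ a in 𝓝 (0 : A), ∀ j ≤ m, j • a ∈ U :=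
    (eventually_all_finite (finite_Iic m)).mpr fun j _ =>
      (continuous_const_smul j).continuousAt.preimage_mem_nhds (by rwa [smul_zero])
  filter_upwards [hsmall] with a ha f
  have hfa : m * ‖f.1 a‖ ≤ 1 / 4 :=
    mul_norm_le_of_forall_nsmul_mem_lam fun j hj => map_nsmul f.1 j a ▸ f.2 (ha j hj)
  rw [map_zero, dist_zero_left]
  rw [div_lt_iff₀ (by positivity)] at hm
  nlinarith [norm_nonneg (f.1 a)]

theorem isCompact_polar {U : Set A} (hU : U ∈ 𝓝 0) : IsCompact (polar U) := by
  let S : Set (A →+ Torus) := {f | MapsTo f U Lam}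
  let S' : Set C(A, Torus) := ContinuousAddMonoidHom.toContinuousMap '' polar U
  have hS : Equicontinuous ((↑) : S → A → Torus) :=
    equicontinuous_of_equicontinuousAt_zero _ (equicontinuousAt_zero_of_mapsTo_lam hU)
  have himage : ContinuousMap.toFun '' S' = (↑) '' S := by
    ext f
    constructor
    · rintro ⟨-, ⟨χ, hχ, rfl⟩, rfl⟩
      exact ⟨χ, hχ, rfl⟩
    · rintro ⟨f, hf, rfl⟩
      let χ : PDual A := ⟨f, hS.continuous ⟨f, hf⟩⟩
      exact ⟨χ, ⟨χ, hf, rfl⟩, rfl⟩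
  have hS' : Equicontinuous ((↑) : S' → A → Torus) := by
    rw [equicontinuous_iff_range, ← Set.image_eq_range] at hS ⊢
    rwa [← himage] at hS
  have hclosed : IsClosed ((↑) '' S : Set (A → Torus)) := by
    have : (↑) '' S = Set.pi U (fun _ => Lam) ∩ Set.range ((↑) : (A →+ Torus) → A → Torus) := by
      ext f
      constructor
      · rintro ⟨g, hg, rfl⟩
        exact ⟨hg, g, rfl⟩
      · rintro ⟨hf, g, rfl⟩
        exact ⟨g, hf, rfl⟩
    rw [this]
    exact (isClosed_set_pi fun _ _ => lam_eq_closedBall ▸ Metric.isClosed_closedBall).inter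
      (AddMonoidHom.isClosed_range_coe A Torus)
  rw [(ContinuousAddMonoidHom.isInducing_toContinuousMap A Torus).isCompact_iff]
  exact ArzelaAscoli.isCompact_of_equicontinuous S' (himage ▸ hclosed.isCompact) hS'

theorem continuous_eval_of_isCompact [T2Space A] {K : Set A} (hK : IsCompact K) :
    Continuous fun p : PDual A × K => p.1 p.2 := by
  have : CompactSpace K := isCompact_iff_compactSpace.mp hK
  have hrestrict : Continuous fun χ : PDual A => χ.toContinuousMap.restrict K :=
    (ContinuousMap.continuous_restrict K).comp
      (ContinuousAddMonoidHom.isInducing_toContinuousMap A Torus).continuous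
  exact continuous_eval.comp (hrestrict.prodMap continuous_id)

/-- A convergent sequence together with its limit is compact, so on it the evaluation pairing is
jointly continuous; compactness of `Φ` then makes `Φ` uniformly small along the sequence. -/
theorem equicontinuousAt_zero_of_isCompact [FirstCountableTopology A] [T2Space A]
    {Φ : Set (PDual A)} (hΦ : IsCompact Φ) :
    EquicontinuousAt (fun χ : Φ => ⇑(χ : PDual A)) 0 := by
  rw [Metric.equicontinuousAt_iff_right]
  intro ε hε
  simp only [map_zero, dist_zero_left]
  rw [eventually_iff_seq_eventually]
  intro u hu
  let K := insert 0 (range u)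
  have hK : IsCompact K := hu.isCompact_insert_range
  let k₀ : K := ⟨0, mem_insert 0 _⟩
  have hcont : Continuous fun z : K × PDual A => z.2 z.1 :=
    (continuous_eval_of_isCompact hK).comp continuous_swap
  have hnear : ∀ᶠ k : K in 𝓝 k₀, ∀ χ ∈ Φ, ‖χ k‖ < ε := by
    refine hΦ.eventually_forall_of_forall_eventually fun χ _ => ?_
    refine hcont.continuousAt.eventually (isOpen_lt continuous_norm continuous_const |>.mem_nhds ?_)
    simpa [k₀] using hε
  have hu' : Tendsto (fun n => (⟨u n, mem_insert_of_mem 0 (mem_range_self n)⟩ : K)) atTop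
      (𝓝 k₀) :=
    IsInducing.subtypeVal.tendsto_nhds_iff.mpr hu
  exact (hu'.eventually hnear).mono fun n hn χ => hn χ χ.2

theorem exists_subset_polar_of_isCompact [FirstCountableTopology A] [T2Space A]
    {Φ : Set (PDual A)} (hΦ : IsCompact Φ) : ∃ U ∈ 𝓝 (0 : A), Φ ⊆ polar U := by
  have h := Metric.equicontinuousAt_iff_right.mp (equicontinuousAt_zero_of_isCompact hΦ) (1 / 4)
    (by norm_num)
  refine ⟨_, h, fun χ hχ a ha => ?_⟩
  simpa [mem_lam_iff] using (ha ⟨χ, hχ⟩).le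

theorem exists_finite_subset_disjoint_polar_inter {F : Set (PDual A)}
    (hF : ∀ K, IsCompact K → IsClosed (F ∩ K)) {U : Set A} (hU : U ∈ 𝓝 0) {T : Set A}
    (hT : Disjoint (polar T) F) : ∃ M ⊆ T, M.Finite ∧ Disjoint (polar M ∩ polar U) F := by
  have hC : IsCompact (F ∩ polar U) :=
    (isCompact_polar hU).of_isClosed_subset (hF _ (isCompact_polar hU)) inter_subset_right
  obtain ⟨M, hMT, hM, hMdisj⟩ :=
    exists_finite_subset_disjoint_polar hC (hT.mono_right inter_subset_left)
  exact ⟨M, hMT, hM, disjoint_left.mpr fun χ hχ hχF =>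
    disjoint_left.mp hMdisj hχ.1 ⟨hχF, hχ.2⟩⟩

theorem exists_seq_finite_disjoint_polar {Ub : ℕ → Set A} (hUb : ∀ n, Ub n ∈ 𝓝 0)
    {F : Set (PDual A)} (hF : ∀ K, IsCompact K → IsClosed (F ∩ K)) (h0 : 0 ∉ F) :
    ∃ S : ℕ → Set A, (∀ n, (S n).Finite) ∧ Monotone S ∧ (∀ n, S (n + 1) ⊆ S n ∪ Ub n) ∧
      ∀ n, Disjoint (polar (S n) ∩ polar (Ub n)) F := by
  have hstep : ∀ n (S : Set A), Disjoint (polar S ∩ polar (Ub n)) F →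
      ∃ M ⊆ S ∪ Ub n, M.Finite ∧ Disjoint (polar M ∩ polar (Ub (n + 1))) F :=
    fun n S hS => exists_finite_subset_disjoint_polar_inter hF (hUb (n + 1)) (by rwa [polar_union])
  choose! M hMsub hMfin hMdisj using hstep
  obtain ⟨S₀, -, hS₀fin, hS₀⟩ := exists_finite_subset_disjoint_polar_inter hF (hUb 0)
    (T := univ) (by rwa [polar_univ, disjoint_singleton_left])
  let S : ℕ → Set A := fun n => Nat.rec S₀ (fun n S => S ∪ M n S) n
  have hinv : ∀ n, (S n).Finite ∧ Disjoint (polar (S n) ∩ polar (Ub n)) F := by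
    intro n
    induction n with
    | zero => exact ⟨hS₀fin, hS₀⟩
    | succ n ih =>
      exact ⟨ih.1.union (hMfin n _ ih.2), (hMdisj n _ ih.2).mono_left
        (inter_subset_inter_left _ (polar_antitone subset_union_right))⟩
  exact ⟨S, fun n => (hinv n).1, monotone_nat_of_le_succ fun n => subset_union_left,
    fun n => union_subset subset_union_left (hMsub n _ (hinv n).2), fun n => (hinv n).2⟩

theorem exists_mem_nhds_zero_disjoint [FirstCountableTopology A] {F : Set (PDual A)}
    (hF : ∀ K, IsCompact K → IsClosed (F ∩ K)) (h0 : 0 ∉ F) :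
    ∃ N ∈ 𝓝 (0 : PDual A), Disjoint N F := by
  obtain ⟨Ub, hUb⟩ := (𝓝 (0 : A)).exists_antitone_basis
  obtain ⟨S, hSfin, hSmono, hSsucc, hSdisj⟩ := exists_seq_finite_disjoint_polar hUb.mem hF h0
  have hS : ∀ m n, S m ⊆ S n ∪ Ub n := by
    intro m n
    induction m with
    | zero => exact (hSmono n.zero_le).trans subset_union_left
    | succ m ih =>
      rcases le_or_gt (m + 1) n with hmn | hnm
      · exact (hSmono hmn).trans subset_union_left
      · exact (hSsucc m).trans (union_subset ih
          ((hUb.antitone (Nat.le_of_lt_succ hnm)).trans subset_union_right))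
  have hK : IsCompact (insert 0 (⋃ n, S n)) := isCompact_insert_of_forall_finite_diff fun U hU => by
    obtain ⟨n, -, hn⟩ := hUb.toHasBasis.mem_iff.mp hU
    refine (hSfin n).subset fun a ⟨ha, haU⟩ => ?_
    obtain ⟨m, ham⟩ := mem_iUnion.mp ha
    exact (hS m n ham).resolve_right fun h => haU (hn h)
  refine ⟨{χ | MapsTo χ (insert 0 (⋃ n, S n)) (Metric.ball 0 (1 / 4))}, ?_, ?_⟩
  · refine IsOpen.mem_nhds ?_ fun a _ => by simp
    exact isOpen_induced (ContinuousMap.isOpen_setOfPred_mapsTo hK Metric.isOpen_ball)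
  · refine disjoint_left.mpr fun χ hχ hχF => ?_
    have hlam : (⇑χ) ⁻¹' Lam ∈ 𝓝 0 := (map_continuous χ).continuousAt.preimage_mem_nhds
      (by rw [map_zero, lam_eq_closedBall]; exact Metric.closedBall_mem_nhds 0 (by norm_num))
    obtain ⟨n, -, hn⟩ := hUb.toHasBasis.mem_iff.mp hlam
    have hχS : χ ∉ polar (S n) := fun h => disjoint_left.mp (hSdisj n) ⟨h, fun a ha => hn ha⟩ hχF
    simp only [polar, mem_ofPred_eq, not_forall] at hχS
    obtain ⟨a, ha, hχa⟩ := hχS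
    exact hχa (mem_lam_iff.mpr (mem_ball_zero_iff.mp
      (hχ (mem_insert_of_mem 0 (mem_iUnion_of_mem n ha)))).le)

theorem compactlyCoherentSpace_pdual [FirstCountableTopology A] :
    CompactlyCoherentSpace (PDual A) := by
  refine CompactlyCoherentSpace.of_isClosed fun t ht => ?_
  have htK : ∀ K, IsCompact K → IsClosed (t ∩ K) := fun K hK => by
    have : CompactSpace K := isCompact_iff_compactSpace.mp hK
    simpa [Subtype.image_preimage_coe, inter_comm] using
      ((ht K hK).isCompact.image continuous_subtype_val).isClosed
  rw [← isOpen_compl_iff, isOpen_iff_mem_nhds]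
  intro χ₀ hχ₀
  let e := Homeomorph.addRight χ₀
  have hF : ∀ K, IsCompact K → IsClosed (e ⁻¹' t ∩ K) := fun K hK => by
    rw [← e.preimage_image K, ← preimage_inter]
    exact (htK _ (hK.image e.continuous)).preimage e.continuous
  obtain ⟨N, hN, hNF⟩ := exists_mem_nhds_zero_disjoint hF (by simpa [e] using hχ₀)
  have hN' : (· - χ₀) ⁻¹' N ∈ 𝓝 χ₀ :=
    (continuous_sub_right χ₀).continuousAt.preimage_mem_nhds (by rwa [sub_self])
  exact mem_of_superset hN' fun χ hχ hχt =>
    disjoint_left.mp hNF hχ (by simpa [e] using hχt)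

theorem equicontinuousAt_zero_of_isCompact_dual [FirstCountableTopology A]
    {Ψ : Set (PDual (PDual A))} (hΨ : IsCompact Ψ) :
    EquicontinuousAt (fun G : Ψ => ⇑(G : PDual (PDual A))) 0 := by
  rw [Metric.equicontinuousAt_iff_right]
  intro ε hε
  simp only [map_zero, dist_zero_left]
  let F : Set (PDual A) := {χ | ∃ G ∈ Ψ, ε ≤ ‖G χ‖}
  have hF : ∀ K, IsCompact K → IsClosed (F ∩ K) := fun K hK => by
    have : CompactSpace K := isCompact_iff_compactSpace.mp hK
    have hcont := continuous_eval_of_isCompact hK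
    have himage : F ∩ K = (fun z : PDual (PDual A) × K => (z.2 : PDual A)) ''
        (Ψ ×ˢ univ ∩ {z | ε ≤ ‖z.1 z.2‖}) := by
      ext χ
      constructor
      · rintro ⟨⟨G, hG, hGχ⟩, hχK⟩
        exact ⟨(G, ⟨χ, hχK⟩), ⟨⟨hG, trivial⟩, hGχ⟩, rfl⟩
      · rintro ⟨⟨G, χ, hχK⟩, ⟨⟨hG, -⟩, hGχ⟩, rfl⟩
        exact ⟨⟨G, hG, hGχ⟩, hχK⟩
    rw [himage]
    refine (((hΨ.prod isCompact_univ).inter_right ?_).image ?_).isClosed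
    · exact isClosed_le continuous_const (continuous_norm.comp hcont)
    · exact continuous_subtype_val.comp continuous_snd
  obtain ⟨N, hN, hNF⟩ := exists_mem_nhds_zero_disjoint hF (by simp [F, hε])
  filter_upwards [hN] with χ hχ G
  by_contra! h
  exact disjoint_left.mp hNF hχ ⟨G, G.2, h⟩

end Dual

variable {A : Type*} [AddCommGroup A] [TopologicalSpace A] [IsTopologicalAddGroup A]

/-- For a metrizable abelian topological group `A`, the double dual `Â̂` is complete and
metrizable, and both evaluation maps `α_A` and `α_{Â}` are continuous. -/
theorem double_dual_complete_metrizable [TopologicalSpace.MetrizableSpace A] :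
    (@CompleteSpace (PDual (PDual A))
        (IsTopologicalAddGroup.rightUniformSpace (PDual (PDual A)))) ∧
    TopologicalSpace.MetrizableSpace (PDual (PDual A)) ∧
    Continuous (evalHom : A → PDual (PDual A)) ∧
    Continuous (evalHom : PDual A → PDual (PDual (PDual A))) := by
  have : CompactlyCoherentSpace (PDual A) := compactlyCoherentSpace_pdual
  obtain ⟨Ub, hUb⟩ := (𝓝 (0 : A)).exists_antitone_basis
  have hcofinal : ∀ Φ : Set (PDual A), IsCompact Φ → ∃ n, Φ ⊆ polar (Ub n) := fun Φ hΦ => by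
    obtain ⟨U, hU, hΦU⟩ := exists_subset_polar_of_isCompact hΦ
    obtain ⟨n, -, hn⟩ := hUb.toHasBasis.mem_iff.mp hU
    exact ⟨n, hΦU.trans (polar_antitone hn)⟩
  have : IsCountablyGenerated (𝓤 C(PDual A, Torus)) :=
    ContinuousMap.isCountablyGenerated_uniformity_of_cofinal (fun n => polar (Ub n))
      (fun n => isCompact_polar (hUb.mem n)) (fun _ _ h => polar_antitone (hUb.antitone h)) hcofinal
  have : TopologicalSpace.MetrizableSpace C(PDual A, Torus) := UniformSpace.metrizableSpace
  exact ⟨ContinuousAddMonoidHom.completeSpace_rightUniformSpace,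
    (ContinuousAddMonoidHom.isEmbedding_toContinuousMap _ _).metrizableSpace,
    continuous_evalHom_of_equicontinuousAt fun _ => equicontinuousAt_zero_of_isCompact,
    continuous_evalHom_of_equicontinuousAt fun _ => equicontinuousAt_zero_of_isCompact_dual⟩

end
end

section
/- Let A be a metrizable abelian topological group and D ≤ A a dense subgroup. Then the restriction map Â → D̂ is an isomorphism of topological groups, where both duals carry the compact-open topology. -/
open scoped Topology

noncomputable section

variable {A : Type*} [AddCommGroup A] [TopologicalSpace A] [IsTopologicalAddGroup A]

/-!
Injectivity and continuity of the restriction map are formal, and surjectivity is extension by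
uniform continuity into the complete group `ℝ/ℤ`. For openness, the polars of compact sets form a
neighbourhood basis of `0` in a dual group, so it suffices to find, for every compact `K ⊆ A`, a
compact `L ⊆ D` with `L^▷ ⊆ K^▷`. Using a countable basis at `0`, every `x ∈ K` is written as a
series `∑ dₙ` with `dₙ` taken from finite sets `Gₙ ⊆ D` whose first `2ⁿ⁺¹` multiples shrink to `0`;
these multiples together with `0` form `L`. A point of `ℝ/ℤ` whose first `m` multiples lie in
`Λ₁ = [-1/4, 1/4]` has norm at most `1/(4m)`, so `χ(L) ⊆ Λ₁` gives `‖χ dₙ‖ ≤ 2⁻ⁿ/8`, hence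
`‖χ x‖ ≤ ∑ 2⁻ⁿ/8 ≤ 1/4`.
-/

open Filter Set Metric
open scoped Pointwise

namespace AddCircle

variable {p : ℝ}

lemma exists_coe_eq_and_abs_eq_norm (t : AddCircle p) :
    ∃ x : ℝ, (x : AddCircle p) = t ∧ |x| = ‖t‖ := by
  obtain ⟨y, rfl⟩ := QuotientAddGroup.mk_surjective t
  refine ⟨y - round (p⁻¹ * y) * p, ?_, (norm_eq p).symm⟩
  rw [coe_sub, ← zsmul_eq_mul]
  simp [coe_period]

lemma norm_nsmul_eq_of_mul_norm_le (hp : p ≠ 0) {t : AddCircle p} {n : ℕ}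
    (h : n * ‖t‖ ≤ |p| / 2) : ‖n • t‖ = n * ‖t‖ := by
  obtain ⟨x, rfl, hx⟩ := exists_coe_eq_and_abs_eq_norm t
  have hnx : |(n : ℝ) * x| = n * ‖(x : AddCircle p)‖ := by rw [abs_mul, Nat.abs_cast, hx]
  rw [← coe_nsmul, nsmul_eq_mul, ← hnx, norm_coe_eq_abs_iff p hp, hnx]
  exact h

lemma image_coe_Icc_eq_closedBall (hp : p ≠ 0) {c : ℝ} (hc : c ≤ |p| / 2) :
    ((↑) : ℝ → AddCircle p) '' Icc (-c) c = closedBall 0 c := by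
  ext t
  simp only [mem_image, mem_Icc, ← abs_le, mem_closedBall, dist_zero_right]
  constructor
  · rintro ⟨x, hx, rfl⟩
    rwa [(norm_coe_eq_abs_iff p hp).2 (hx.trans hc)]
  · intro ht
    obtain ⟨x, hxt, hx⟩ := exists_coe_eq_and_abs_eq_norm t
    exact ⟨x, hx ▸ ht, hxt⟩

lemma natCast_mul_norm_le_of_forall_norm_nsmul_le (hp : p ≠ 0) {t : AddCircle p} {m : ℕ}
    (h : ∀ j ≤ m, ‖j • t‖ ≤ |p| / 4) : m * ‖t‖ ≤ |p| / 4 := by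
  induction m with
  | zero => simp only [CharP.cast_eq_zero, zero_mul]; positivity
  | succ m ih =>
    have hm : m * ‖t‖ ≤ |p| / 4 := ih fun j hj => h j (by omega)
    have ht : ‖t‖ ≤ |p| / 4 := by simpa using h 1 (by omega)
    have hle : ((m + 1 : ℕ) : ℝ) * ‖t‖ ≤ |p| / 2 := by push_cast; linarith
    rw [← norm_nsmul_eq_of_mul_norm_le hp hle]
    exact h (m + 1) le_rfl

end AddCircle

lemma Lam_eq_closedBall : Lam = closedBall 0 (1 / 4) :=
  AddCircle.image_coe_Icc_eq_closedBall one_ne_zero (by norm_num)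

lemma mem_polar_iff {S : Set A} {χ : PDual A} : χ ∈ polar S ↔ ∀ s ∈ S, ‖χ s‖ ≤ 1 / 4 := by
  simp [polar, Lam_eq_closedBall]

lemma natCast_mul_norm_le_of_mem_polar {S : Set A} {χ : PDual A} {m : ℕ}
    (hχ : χ ∈ polar ((Iic m : Set ℕ) • S)) {s : A} (hs : s ∈ S) : m * ‖χ s‖ ≤ 1 / 4 := by
  simpa using AddCircle.natCast_mul_norm_le_of_forall_norm_nsmul_le one_ne_zero fun j hj => by
    simpa [← map_nsmul] using mem_polar_iff.1 hχ _ (smul_mem_smul hj hs)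

lemma hasBasis_nhds_zero_mapsTo_closedBall :
    (𝓝 (0 : PDual A)).HasBasis (fun Kε : Set A × ℝ => IsCompact Kε.1 ∧ 0 < Kε.2)
      fun Kε => {χ | MapsTo χ Kε.1 (closedBall 0 Kε.2)} := by
  rw [(ContinuousAddMonoidHom.isInducing_toContinuousMap A Torus).nhds_eq_comap]
  exact (nhds_basis_closedBall.nhds_continuousMapConst (X := A)).comap _

lemma hasBasis_nhds_zero_polar : (𝓝 (0 : PDual A)).HasBasis IsCompact polar := by
  refine hasBasis_nhds_zero_mapsTo_closedBall.to_hasBasis ?_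
    fun K hK => ⟨(K, 1 / 4), ⟨hK, by norm_num⟩, fun χ hχ => mem_polar_iff.2 fun s hs => ?_⟩
  · rintro ⟨K, ε⟩ ⟨hK, hε⟩
    obtain ⟨m, hm⟩ := exists_nat_gt (1 / (4 * ε))
    refine ⟨(Iic m : Set ℕ) • K, (finite_Iic m).isCompact.smul_set hK, fun χ hχ x hx => ?_⟩
    have hχx := natCast_mul_norm_le_of_mem_polar hχ hx
    rw [div_lt_iff₀ (by positivity)] at hm
    rw [mem_closedBall, dist_zero_right]
    nlinarith [norm_nonneg (χ x)]
  · simpa using hχ hs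

lemma isCompact_insert_iUnion_of_tendsto_smallSets {X : Type*} [TopologicalSpace X]
    {T : ℕ → Set X} {x : X} (hfin : ∀ n, (T n).Finite) (hT : Tendsto T atTop (𝓝 x).smallSets) :
    IsCompact (insert x (⋃ n, T n)) := by
  have hfst : Tendsto (Sigma.fst : (Σ n, T n) → ℕ) cofinite atTop := by
    rw [← Nat.cofinite_eq_atTop]
    refine Tendsto.cofinite_of_finite_preimage_singleton fun n => ?_
    have := (hfin n).to_subtype
    refine (finite_range (Sigma.mk (β := fun n => T n) n)).subset ?_
    rintro ⟨m, y⟩ rfl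
    exact ⟨y, rfl⟩
  have hval : Tendsto (fun i : Σ n, T n => (i.2 : X)) cofinite (𝓝 x) :=
    (hT.comp hfst).of_smallSets (Eventually.of_forall fun i => i.2.2)
  convert hval.isCompact_insert_range_of_cofinite using 2
  ext y
  simp

section TopologicalGroup

variable {G : Type*} [AddGroup G] [TopologicalSpace G] [IsTopologicalAddGroup G]

lemma Dense.exists_finite_subset_forall_sub_mem {D K W : Set G} (hD : Dense D) (hK : IsCompact K)
    (hW : W ∈ 𝓝 0) : ∃ F ⊆ D, F.Finite ∧ ∀ x ∈ K, ∃ e ∈ F, x - e ∈ W := by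
  have hopen : ∀ d ∈ D, IsOpen ((· - d) ⁻¹' interior W) := fun d _ =>
    isOpen_interior.preimage (continuous_id.sub continuous_const)
  have hcover : K ⊆ ⋃ d ∈ D, (· - d) ⁻¹' interior W := by
    intro x _
    have hO : IsOpen ((x - ·) ⁻¹' interior W) :=
      isOpen_interior.preimage (continuous_const.sub continuous_id)
    obtain ⟨d, hdO, hdD⟩ :=
      hD.inter_open_nonempty _ hO ⟨x, by simpa using mem_interior_iff_mem_nhds.2 hW⟩
    exact mem_iUnion₂.2 ⟨d, hdD, hdO⟩
  obtain ⟨F, hFD, hF, hKF⟩ := hK.elim_finite_subcover_image hopen hcover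
  refine ⟨F, hFD, hF, fun x hx => ?_⟩
  obtain ⟨e, he, hxe⟩ := mem_iUnion₂.1 (hKF hx)
  exact ⟨e, he, interior_subset hxe⟩

lemma exists_antitone_nhds_zero_tendsto_nsmul_sub [FirstCountableTopology G] (N : ℕ → ℕ) :
    ∃ W : ℕ → Set G, Antitone W ∧ (∀ n, W n ∈ 𝓝 0) ∧ Tendsto W atTop (𝓝 0).smallSets ∧
      Tendsto (fun n => (Iic (N n) : Set ℕ) • (W n - W n)) atTop (𝓝 0).smallSets := by
  obtain ⟨U, hU⟩ := (𝓝 (0 : G)).exists_antitone_basis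
  have hsmall {S : ℕ → Set G} (hS : ∀ n, S n ⊆ U n) : Tendsto S atTop (𝓝 0).smallSets :=
    hU.toHasBasis.smallSets.tendsto_right_iff.2 fun m _ =>
      (eventually_ge_atTop m).mono fun n hn => (hS n).trans (hU.antitone hn)
  have hV : ∀ n, ∃ V ∈ 𝓝 (0 : G), V ⊆ U n ∧ (Iic (N n) : Set ℕ) • (V - V) ⊆ U n := by
    intro n
    have : ∀ᶠ p : G × G in 𝓝 0 ×ˢ 𝓝 0, ∀ j ∈ Iic (N n), j • (p.1 - p.2) ∈ U n := by
      rw [← nhds_prod_eq, Prod.mk_zero_zero]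
      refine (finite_Iic _).eventually_all.2 fun j _ => ?_
      refine ((continuous_fst.sub continuous_snd).const_smul j).continuousAt.preimage_mem_nhds ?_
      simpa using hU.mem n
    obtain ⟨V, hV, hVU⟩ := mem_prod_self_iff.1 this
    refine ⟨V ∩ U n, inter_mem hV (hU.mem n), inter_subset_right, ?_⟩
    rintro _ ⟨j, hj, _, ⟨a, ha, b, hb, rfl⟩, rfl⟩
    exact hVU (mk_mem_prod ha.1 hb.1) j hj
  choose V hV hVU hVV using hV
  have hWV (n : ℕ) : ⋂ k ∈ Iic n, V k ⊆ V n := biInter_subset_of_mem self_mem_Iic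
  refine ⟨fun n => ⋂ k ∈ Iic n, V k, fun m n hmn => biInter_mono (Iic_subset_Iic.2 hmn)
    fun _ _ => subset_rfl, fun n => (biInter_mem (finite_Iic n)).2 fun k _ => hV k,
    hsmall fun n => (hWV n).trans (hVU n), hsmall fun n => ?_⟩
  exact (smul_subset_smul_left (sub_subset_sub (hWV n) (hWV n))).trans (hVV n)

end TopologicalGroup

lemma AddSubgroup.exists_finite_series_of_dense [FirstCountableTopology A] {D : AddSubgroup A}
    (hD : Dense (D : Set A)) {K : Set A} (hK : IsCompact K) (N : ℕ → ℕ) :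
    ∃ G : ℕ → Set A, (∀ n, (G n).Finite ∧ G n ⊆ D) ∧
      Tendsto (fun n => (Iic (N n) : Set ℕ) • G n) atTop (𝓝 0).smallSets ∧
      ∀ x ∈ K, ∃ d : ℕ → A, (∀ n, d n ∈ G n) ∧
        Tendsto (fun n => ∑ i ∈ Finset.range n, d i) atTop (𝓝 x) := by
  obtain ⟨W, hWanti, hW0, hWsmall, hWmul⟩ :=
    exists_antitone_nhds_zero_tendsto_nsmul_sub (G := A) fun n => N (n + 1)
  choose F hFD hFfin hF using fun n => hD.exists_finite_subset_forall_sub_mem hK (hW0 n)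
  -- Each `x ∈ K` is the limit of points `e n ∈ F n` with `x - e n ∈ W n`; the series has the
  -- `e n` as partial sums, so its terms `e (n + 1) - e n = (x - e n) - (x - e (n + 1))` lie in
  -- `W n - W n`, whose first `N (n + 1)` multiples shrink to `0`.
  let G : ℕ → Set A
    | 0 => F 0
    | n + 1 => (F (n + 1) - F n) ∩ (W n - W n)
  refine ⟨G, fun n => ?_, ?_, fun x hx => ?_⟩
  · cases n with
    | zero => exact ⟨hFfin 0, hFD 0⟩
    | succ n =>
      refine ⟨((hFfin (n + 1)).sub (hFfin n)).inter_of_left _, ?_⟩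
      rintro _ ⟨⟨a, ha, b, hb, rfl⟩, -⟩
      exact D.sub_mem (hFD _ ha) (hFD _ hb)
  · refine (tendsto_add_atTop_iff_nat 1).1 (hWmul.smallSets_mono (Eventually.of_forall
      fun n => ?_))
    exact smul_subset_smul_left inter_subset_right
  · choose e he hxe using fun n => hF n x hx
    let prev : ℕ → A
      | 0 => 0
      | n + 1 => e n
    refine ⟨fun i => prev (i + 1) - prev i, fun n => ?_, ?_⟩
    · cases n with
      | zero => simpa [prev, G] using he 0
      | succ n =>
        refine ⟨⟨e (n + 1), he _, e n, he n, rfl⟩, ?_⟩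
        refine ⟨x - e n, hxe n, x - e (n + 1), hWanti n.le_succ (hxe (n + 1)), ?_⟩
        simp only [prev]
        abel
    · have hsum (n : ℕ) : ∑ i ∈ Finset.range n, (prev (i + 1) - prev i) = prev n := by
        rw [Finset.sum_range_sub, show prev 0 = 0 from rfl, sub_zero]
      simp only [hsum]
      refine (tendsto_add_atTop_iff_nat 1).1 ?_
      have hxe0 : Tendsto (fun n => x - e n) atTop (𝓝 0) :=
        hWsmall.of_smallSets (Eventually.of_forall hxe)
      simpa using (tendsto_const_nhds (x := x)).sub hxe0

lemma exists_isCompact_subset_polar_subset [FirstCountableTopology A] {D : AddSubgroup A}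
    (hD : Dense (D : Set A)) {K : Set A} (hK : IsCompact K) :
    ∃ L ⊆ (D : Set A), IsCompact L ∧ polar L ⊆ polar K := by
  obtain ⟨G, hG, hGsmall, hseries⟩ := D.exists_finite_series_of_dense hD hK fun n => 2 ^ (n + 1)
  refine ⟨insert 0 (⋃ n, (Iic (2 ^ (n + 1)) : Set ℕ) • G n), ?_, ?_, fun χ hχ => ?_⟩
  · refine insert_subset D.zero_mem (iUnion_subset fun n => ?_)
    rintro _ ⟨j, -, g, hg, rfl⟩
    exact D.nsmul_mem ((hG n).2 hg) j
  · exact isCompact_insert_iUnion_of_tendsto_smallSets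
      (fun n => (finite_Iic _).smul (hG n).1) hGsmall
  refine mem_polar_iff.2 fun x hx => ?_
  obtain ⟨d, hdG, hd⟩ := hseries x hx
  have hbound (n : ℕ) : ‖χ (d n)‖ ≤ 1 / 8 * (1 / 2) ^ n := by
    have h := natCast_mul_norm_le_of_mem_polar
      (fun s hs => hχ s (Or.inr (mem_iUnion.2 ⟨n, hs⟩))) (hdG n)
    rw [show (1 / 8 : ℝ) * (1 / 2) ^ n = 1 / 4 / 2 ^ (n + 1) by rw [one_div_pow, pow_succ]; ring,
      le_div_iff₀ (by positivity)]
    push_cast at h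
    linarith
  have hpartial (n : ℕ) : ‖χ (∑ i ∈ Finset.range n, d i)‖ ≤ 1 / 4 :=
    calc ‖χ (∑ i ∈ Finset.range n, d i)‖
        ≤ ∑ i ∈ Finset.range n, ‖χ (d i)‖ := by rw [map_sum]; exact norm_sum_le _ _
      _ ≤ ∑ i ∈ Finset.range n, 1 / 8 * (1 / 2 : ℝ) ^ i := Finset.sum_le_sum fun i _ => hbound i
      _ ≤ 1 / 8 * 2 := by rw [← Finset.mul_sum]; gcongr; exact sum_geometric_two_le n
      _ = 1 / 4 := by norm_num
  exact le_of_tendsto ((continuous_norm.tendsto _).comp ((χ.continuous.tendsto x).comp hd))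
    (Eventually.of_forall hpartial)

section Restriction

lemma Dense.exists_continuousAddMonoidHom_extension {E : Type*} [AddCommGroup E] [UniformSpace E]
    [IsUniformAddGroup E] [CompleteSpace E] [T2Space E] {D : AddSubgroup A}
    (hD : Dense (D : Set A)) (ψ : ContinuousAddMonoidHom D E) :
    ∃ χ : ContinuousAddMonoidHom A E, ∀ d : D, χ d = ψ d := by
  let _ : UniformSpace A := IsTopologicalAddGroup.rightUniformSpace A
  have : IsUniformAddGroup A := isUniformAddGroup_of_addCommGroup
  have hψ : UniformContinuous ψ :=
    uniformContinuous_of_continuousAt_zero ψ ψ.continuous.continuousAt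
  have hcont : Continuous (hD.extend ψ) := (uniformContinuous_uniformly_extend
    isUniformEmbedding_subtype_val.isUniformInducing hD.denseRange_val hψ).continuous
  have heq (d : D) : hD.extend ψ d = ψ d := hD.extend_eq ψ.continuous d
  have hadd : (fun p : A × A => hD.extend ψ (p.1 + p.2)) =
      fun p => hD.extend ψ p.1 + hD.extend ψ p.2 := by
    refine Continuous.ext_on (hD.prod hD) (hcont.comp continuous_add)
      ((hcont.comp continuous_fst).add (hcont.comp continuous_snd)) ?_
    rintro ⟨a, b⟩ ⟨ha, hb⟩
    have h := heq (⟨a, ha⟩ + ⟨b, hb⟩)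
    rw [map_add, ← heq, ← heq] at h
    exact h
  exact ⟨{ toFun := hD.extend ψ
           map_zero' := by simpa using heq 0
           map_add' := fun x y => congrFun hadd (x, y)
           continuous_toFun := hcont }, heq⟩

variable (D : AddSubgroup A)

def dualRestrict : ContinuousAddMonoidHom (PDual A) (PDual D) :=
  ContinuousAddMonoidHom.compLeft Torus
    { D.subtype with continuous_toFun := continuous_subtype_val }

variable {D}

lemma dualRestrict_injective (hD : Dense (D : Set A)) : Function.Injective (dualRestrict D) :=
  fun χ₁ χ₂ h => ContinuousAddMonoidHom.ext <| congrFun <|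
    Continuous.ext_on hD χ₁.continuous χ₂.continuous fun a ha => DFunLike.congr_fun h ⟨a, ha⟩

lemma dualRestrict_surjective (hD : Dense (D : Set A)) : Function.Surjective (dualRestrict D) :=
  fun ψ => (hD.exists_continuousAddMonoidHom_extension ψ).imp fun _ h =>
    ContinuousAddMonoidHom.ext h

lemma isOpenMap_dualRestrict [FirstCountableTopology A] (hD : Dense (D : Set A)) :
    IsOpenMap (dualRestrict D) := by
  refine IsTopologicalAddGroup.isOpenMap_iff_nhds_zero.2 fun S hS => ?_
  obtain ⟨K, hK, hKS⟩ := hasBasis_nhds_zero_polar.mem_iff.1 hS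
  obtain ⟨L, hLD, hL, hLK⟩ := exists_isCompact_subset_polar_subset hD hK
  refine hasBasis_nhds_zero_polar.mem_iff.2 ⟨(↑) ⁻¹' L, ?_, fun ψ hψ => ?_⟩
  · rwa [Topology.IsEmbedding.subtypeVal.isCompact_iff,
      image_preimage_eq_of_subset (by rwa [Subtype.range_coe])]
  obtain ⟨χ, rfl⟩ := dualRestrict_surjective hD ψ
  exact hKS (hLK fun s hs => hψ ⟨s, hLD hs⟩ hs)

end Restriction

/-- For a metrizable abelian topological group `A` and a dense subgroup `D ≤ A`, the
restriction map `Â → D̂` is an isomorphism of topological groups. -/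
theorem restriction_topIso_of_dense_metrizable [TopologicalSpace.MetrizableSpace A]
    (D : AddSubgroup A) (hD : Dense (D : Set A)) :
    Function.Bijective
      (fun χ : PDual A => χ.comp
        ({ D.subtype with continuous_toFun := continuous_subtype_val } :
          ContinuousAddMonoidHom D A)) ∧
    Continuous
      (fun χ : PDual A => χ.comp
        ({ D.subtype with continuous_toFun := continuous_subtype_val } :
          ContinuousAddMonoidHom D A)) ∧
    IsOpenMap
      (fun χ : PDual A => χ.comp
        ({ D.subtype with continuous_toFun := continuous_subtype_val } :
          ContinuousAddMonoidHom D A)) :=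
  ⟨⟨dualRestrict_injective hD, dualRestrict_surjective hD⟩, (dualRestrict D).continuous,
    isOpenMap_dualRestrict hD⟩
end
end
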